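/- Let ξ, φ₁, …, φ_R be vectors in a complex inner product space. Then ∑_{r=1}^R |⟨ξ, φ_r⟩| ≤ ‖ξ‖ · (∑_{r=1}^R ∑_{s=1}^R |⟨φ_r, φ_s⟩|)^{1/2}. -/

import Mathlib

/-! Pick weights `c r` of modulus at most one with `c r * ⟪ξ, φ r⟫ = ‖⟪ξ, φ r⟫‖`. The left-hand side
is then `⟪ξ, ψ⟫` for `ψ = ∑ r, c r • φ r`, so Cauchy–Schwarz bounds it by `‖ξ‖ * ‖ψ‖`, and expanding
`‖ψ‖ ^ 2 = ∑ r, ∑ s, conj (c r) * c s * ⟪φ r, φ s⟫` termwise gives the double sum. -/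

open scoped InnerProductSpace ComplexConjugate
open Finset RCLike

section

variable {𝕜 E ι : Type*} [RCLike 𝕜] [NormedAddCommGroup E] [InnerProductSpace 𝕜 E] [Fintype ι]

lemma RCLike.exists_norm_le_one_mul_eq_norm (z : 𝕜) : ∃ c : 𝕜, ‖c‖ ≤ 1 ∧ c * z = ‖z‖ := by
  rcases eq_or_ne z 0 with rfl | hz
  · exact ⟨0, by simp⟩
  refine ⟨conj z / ‖z‖, by simp [norm_div, hz], ?_⟩
  rw [div_mul_eq_mul_div, conj_mul]
  field_simp [ofReal_ne_zero.mpr (norm_ne_zero_iff.mpr hz)]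

lemma norm_sum_smul_sq_le {c : ι → 𝕜} (hc : ∀ r, ‖c r‖ ≤ 1) (φ : ι → E) :
    ‖∑ r, c r • φ r‖ ^ 2 ≤ ∑ r, ∑ s, ‖⟪φ r, φ s⟫_𝕜‖ := by
  rw [← inner_self_eq_norm_sq (𝕜 := 𝕜)]
  refine (re_le_norm _).trans ?_
  calc ‖⟪∑ r, c r • φ r, ∑ s, c s • φ s⟫_𝕜‖
      = ‖∑ r, ∑ s, conj (c r) * (c s * ⟪φ r, φ s⟫_𝕜)‖ := by
        simp_rw [sum_inner, inner_sum, inner_smul_left, inner_smul_right]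
    _ ≤ ∑ r, ∑ s, ‖⟪φ r, φ s⟫_𝕜‖ := by
        refine (norm_sum_le _ _).trans (sum_le_sum fun r _ => (norm_sum_le _ _).trans
          (sum_le_sum fun s _ => ?_))
        rw [norm_mul, norm_mul, norm_conj, ← mul_assoc]
        exact mul_le_of_le_one_left (norm_nonneg _) (mul_le_one₀ (hc r) (norm_nonneg _) (hc s))

theorem sum_norm_inner_le_norm_mul_sqrt (ξ : E) (φ : ι → E) :
    ∑ r, ‖⟪ξ, φ r⟫_𝕜‖ ≤ ‖ξ‖ * √(∑ r, ∑ s, ‖⟪φ r, φ s⟫_𝕜‖) := by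
  choose c hc hcξ using fun r => exists_norm_le_one_mul_eq_norm ⟪ξ, φ r⟫_𝕜
  have hsum : ⟪ξ, ∑ r, c r • φ r⟫_𝕜 = ((∑ r, ‖⟪ξ, φ r⟫_𝕜‖ : ℝ) : 𝕜) := by
    simp [inner_sum, inner_smul_right, hcξ]
  calc ∑ r, ‖⟪ξ, φ r⟫_𝕜‖ = ‖⟪ξ, ∑ r, c r • φ r⟫_𝕜‖ := by
        rw [hsum, norm_ofReal, abs_of_nonneg (by positivity)]
    _ ≤ ‖ξ‖ * ‖∑ r, c r • φ r‖ := norm_inner_le_norm _ _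
    _ ≤ ‖ξ‖ * √(∑ r, ∑ s, ‖⟪φ r, φ s⟫_𝕜‖) := by
        gcongr
        exact Real.le_sqrt_of_sq_le (norm_sum_smul_sq_le hc φ)

end

open scoped InnerProductSpace in
theorem halasz_montgomery_first {E : Type*} [NormedAddCommGroup E] [InnerProductSpace ℂ E]
    (R : ℕ) (ξ : E) (φ : Fin R → E) :
    ∑ r : Fin R, ‖⟪ξ, φ r⟫_ℂ‖ ≤
      ‖ξ‖ * Real.sqrt (∑ r : Fin R, ∑ s : Fin R, ‖⟪φ r, φ s⟫_ℂ‖) :=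
  sum_norm_inner_le_norm_mul_sqrt ξ φ
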